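/- Let sinc(x) = sin(πx)/(πx) for x ≠ 0 and sinc(0) = 1, let θ > 0, and set β = ⌊1/θ⌋ and α = 1/θ − β. Then the series Σ_{ℓ∈ℤ} sinc(ℓ/θ)² converges and equals θ²·(β² + 2αβ + α). -/

import Mathlib

open Real

/-!
Write `1/θ = β + α` with `β ∈ ℤ` and `α ∈ [0, 1)`. Since `sin²` is `π`-periodic,
`sin²(πn/θ) = sin²(πnα)`, so for `n ≠ 0` the terms are `θ²/π² · sin²(πnα)/n²`. The Fourier
series of the second Bernoulli polynomial gives `Σ_{n≥1} sin²(πnx)/n² = π²x(1-x)/2` on `[0, 1]`,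
hence the whole sum is `1 + θ²α(1-α)`, which equals `θ²(β² + 2αβ + α)` because `θ(β + α) = 1`.
-/

noncomputable def sinc (x : ℝ) : ℝ := if x = 0 then 1 else Real.sin (π * x) / (π * x)

lemma hasSum_one_div_nat_sq_mul_cos {x : ℝ} (hx : x ∈ Set.Icc (0 : ℝ) 1) :
    HasSum (fun n : ℕ => 1 / (n : ℝ) ^ 2 * cos (2 * π * n * x)) (π ^ 2 * (x ^ 2 - x + 6⁻¹)) := by
  have h := hasSum_one_div_nat_pow_mul_cos one_ne_zero hx
  rw [mul_one, ← bernoulliFun, bernoulliFun_two] at h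
  convert h using 1
  rw [Nat.factorial_two]
  push_cast
  ring

lemma hasSum_sin_sq_div_nat_sq {x : ℝ} (hx : x ∈ Set.Icc (0 : ℝ) 1) :
    HasSum (fun n : ℕ => sin (π * n * x) ^ 2 / (n : ℝ) ^ 2) (π ^ 2 * x * (1 - x) / 2) := by
  have h := ((hasSum_one_div_nat_sq_mul_cos (x := 0) (by simp)).sub
    (hasSum_one_div_nat_sq_mul_cos hx)).div_const 2
  have hterm (n : ℕ) : sin (π * n * x) ^ 2 / (n : ℝ) ^ 2
      = (1 / (n : ℝ) ^ 2 * cos (2 * π * n * 0) - 1 / (n : ℝ) ^ 2 * cos (2 * π * n * x)) / 2 := by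
    rw [sin_sq_eq_half_sub, mul_zero, cos_zero]
    ring_nf
  rw [funext hterm, show π ^ 2 * x * (1 - x) / 2
    = (π ^ 2 * (0 ^ 2 - 0 + 6⁻¹) - π ^ 2 * (x ^ 2 - x + 6⁻¹)) / 2 by ring]
  exact h

lemma sin_sq_add_int_mul_pi (x : ℝ) (k : ℤ) : sin (x + k * π) ^ 2 = sin x ^ 2 := by
  rw [sin_add_int_mul_pi, mul_pow, sq ((-1 : ℝ) ^ k), ← zpow_add₀ (by norm_num),
    Even.neg_one_zpow ⟨k, rfl⟩, one_mul]

lemma sin_sq_pi_mul_nat_mul_fract (n : ℕ) (t : ℝ) :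
    sin (π * n * Int.fract t) ^ 2 = sin (π * n * t) ^ 2 := by
  rw [← sin_sq_add_int_mul_pi _ (n * ⌊t⌋), ← Int.self_sub_floor]
  push_cast
  ring_nf

lemma sinc_eq_real_sinc_pi_mul (x : ℝ) : _root_.sinc x = Real.sinc (π * x) := by
  simp only [_root_.sinc, Real.sinc, mul_eq_zero, pi_ne_zero, false_or]

lemma sinc_even : Function.Even _root_.sinc := fun x => by
  rw [sinc_eq_real_sinc_pi_mul, sinc_eq_real_sinc_pi_mul, mul_neg, Real.sinc_neg]

-- At `n = 0` the second summand is the junk value `0 / 0 = 0`.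
lemma sinc_sq_nat_mul {t : ℝ} (ht : t ≠ 0) (n : ℕ) :
    _root_.sinc (n * t) ^ 2
      = (if n = 0 then 1 else 0) + sin (π * n * Int.fract t) ^ 2 / n ^ 2 / (π * t) ^ 2 := by
  rw [sinc_eq_real_sinc_pi_mul]
  rcases eq_or_ne n 0 with rfl | hn
  · simp
  · have : π * (n * t) ≠ 0 := by positivity
    rw [sin_sq_pi_mul_nat_mul_fract, Real.sinc_of_ne_zero this, if_neg hn]
    field_simp
    ring

lemma hasSum_sinc_sq_nat_mul {t : ℝ} (ht : t ≠ 0) :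
    HasSum (fun n : ℕ => _root_.sinc (n * t) ^ 2)
      (1 + Int.fract t * (1 - Int.fract t) / (2 * t ^ 2)) := by
  have hfract : Int.fract t ∈ Set.Icc (0 : ℝ) 1 := ⟨Int.fract_nonneg t, (Int.fract_lt_one t).le⟩
  have h := (hasSum_ite_eq 0 1).add ((hasSum_sin_sq_div_nat_sq hfract).div_const ((π * t) ^ 2))
  have hvalue : Int.fract t * (1 - Int.fract t) / (2 * t ^ 2)
      = π ^ 2 * Int.fract t * (1 - Int.fract t) / 2 / (π * t) ^ 2 := by
    field_simp
  rw [funext (sinc_sq_nat_mul ht), hvalue]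
  exact h

lemma HasSum.of_nat_of_even {G : Type*} [AddCommGroup G] [TopologicalSpace G]
    [IsTopologicalAddGroup G] {f : ℤ → G} {a : G} (hf : f.Even)
    (h : HasSum (fun n : ℕ => f n) a) : HasSum f (a + a - f 0) :=
  h.of_nat_of_neg (h.congr_fun fun n => hf n)

lemma hasSum_sinc_sq_int_mul {t : ℝ} (ht : t ≠ 0) :
    HasSum (fun ℓ : ℤ => _root_.sinc (ℓ * t) ^ 2)
      (1 + Int.fract t * (1 - Int.fract t) / t ^ 2) := by
  have h := (hasSum_sinc_sq_nat_mul ht).of_nat_of_even (f := fun ℓ : ℤ => _root_.sinc (ℓ * t) ^ 2)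
    fun ℓ => by simp only [Int.cast_neg, neg_mul, sinc_even _]
  rw [Int.cast_zero, zero_mul, sinc_eq_real_sinc_pi_mul, mul_zero, Real.sinc_zero] at h
  rw [show 1 + Int.fract t * (1 - Int.fract t) / t ^ 2
    = 1 + Int.fract t * (1 - Int.fract t) / (2 * t ^ 2)
      + (1 + Int.fract t * (1 - Int.fract t) / (2 * t ^ 2)) - 1 ^ 2 by field_simp; ring]
  exact h

/-- Parseval computation underlying Eq. (20) of the paper: the squared ℓ²-norm of the
sampled-sinc channel taps. With `β = ⌊1/θ⌋` and `α = 1/θ - β`,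
`Σ_{ℓ∈ℤ} sinc(ℓ/θ)² = θ²(β² + 2αβ + α)`. -/
theorem sampled_sinc_parseval (θ : ℝ) (hθ : 0 < θ) :
    HasSum (fun ℓ : ℤ => (_root_.sinc ((ℓ : ℝ) / θ)) ^ 2)
      (θ ^ 2 * ((⌊1 / θ⌋ : ℝ) ^ 2 + 2 * (1 / θ - (⌊1 / θ⌋ : ℝ)) * (⌊1 / θ⌋ : ℝ)
        + (1 / θ - (⌊1 / θ⌋ : ℝ)))) := by
  have hsum := hasSum_sinc_sq_int_mul (one_div_ne_zero hθ.ne')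
  simp only [← div_eq_mul_one_div] at hsum
  convert hsum using 1
  have hsplit : θ * (⌊1 / θ⌋ + Int.fract (1 / θ)) = 1 := by
    rw [Int.floor_add_fract, mul_one_div_cancel hθ.ne']
  rw [Int.self_sub_floor, one_div_pow, div_div_eq_mul_div, div_one]
  linear_combination (θ * (⌊1 / θ⌋ + Int.fract (1 / θ)) + 1) * hsplit
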